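/- arXiv:1905.09584 — 5 statements merged into one kernel-verified Lean document; each statement's English description precedes it below -/
import Mathlib

section
/- Let d, p₀ > 0 and let u : [0,T] × [−h₀,h₀] → ℝ be continuous with continuous time derivative, satisfying u_t(t,x) ≥ d ∫_{−h₀}^{h₀} J(x−y) u(t,y) dy − d u(t,x) + c(t,x) u(t,x) for a bounded measurable c, and u(0,x) ≥ 0 for all x ∈ [−h₀,h₀]. Then u(t,x) ≥ 0 for all (t,x) ∈ [0,T] × [−h₀,h₀]. -/
/-!
Put `w(t, x) = e^{-(C+1)t} u(t, x)`, where `|c| ≤ C`, and let `(t₀, x₀)` be a minimum point of `w`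
on the compact rectangle. If `u` were somewhere negative, then `u(t₀, x₀) < 0` and `t₀ > 0`.
Minimality in time gives `u_t ≤ (C+1) u` at `(t₀, x₀)`. Minimality in space, together with
`J ≥ 0` and `∫ J = 1`, gives `∫ J(x₀ - y) u(t₀, y) dy ≥ u(t₀, x₀)`, so the nonlocal part of the
inequality is nonnegative and `u_t ≥ c u` there. Hence `(C + 1 - c) u(t₀, x₀) ≥ 0`, which is
impossible since `C + 1 - c > 0`.
-/

open Real Set MeasureTheory

theorem HasDerivAt.nonpos_of_isMinOn_Icc {f : ℝ → ℝ} {f' a t : ℝ} (hf : HasDerivAt f f' t)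
    (hat : a < t) (hmin : IsMinOn f (Icc a t) t) : f' ≤ 0 := by
  have hcone : a - t ∈ posTangentConeAt (Icc a t) t :=
    sub_mem_posTangentConeAt_of_segment_subset (by rw [segment_symm, segment_eq_Icc hat.le])
  have := hmin.localize.hasFDerivWithinAt_nonneg hf.hasFDerivAt.hasFDerivWithinAt hcone
  rw [ContinuousLinearMap.toSpanSingleton_apply, smul_eq_mul] at this
  nlinarith

theorem HasDerivAt.le_mul_of_isMinOn_exp_mul {f : ℝ → ℝ} {f' k a t : ℝ} (hf : HasDerivAt f f' t)
    (hat : a < t) (hmin : IsMinOn (fun s => rexp (-(k * s)) * f s) (Icc a t) t) :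
    f' ≤ k * f t := by
  have hweight : HasDerivAt (fun s => rexp (-(k * s))) (rexp (-(k * t)) * -k) t :=
    (((hasDerivAt_id t).const_mul k).neg.congr_deriv (by ring)).exp
  have := (hweight.mul hf).nonpos_of_isMinOn_Icc hat hmin
  nlinarith [exp_pos (-(k * t))]

theorem intervalIntegral_comp_sub_left_le_integral {J : ℝ → ℝ} (hJ : Integrable J)
    (hJnonneg : ∀ x, 0 ≤ J x) {a b : ℝ} (hab : a ≤ b) (x : ℝ) :
    ∫ y in a..b, J (x - y) ≤ ∫ y, J y := by
  rw [intervalIntegral.integral_of_le hab, ← integral_sub_left_eq_self J volume x]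
  exact setIntegral_le_integral (hJ.comp_sub_left x) (.of_forall fun y => hJnonneg _)

theorem le_intervalIntegral_kernel_mul_of_isMinOn {J v : ℝ → ℝ} (hJ : Integrable J)
    (hJnonneg : ∀ x, 0 ≤ J x) (hJ1 : ∫ x, J x ≤ 1) {a b x₀ : ℝ} (hab : a ≤ b)
    (hv : ContinuousOn v (Icc a b)) (hmin : IsMinOn v (Icc a b) x₀) (hneg : v x₀ ≤ 0) :
    v x₀ ≤ ∫ y in a..b, J (x₀ - y) * v y := by
  have hJx₀ : Integrable (fun y => J (x₀ - y)) := hJ.comp_sub_left x₀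
  have hmass := intervalIntegral_comp_sub_left_le_integral hJ hJnonneg hab x₀
  calc v x₀ ≤ (∫ y in a..b, J (x₀ - y)) * v x₀ := by nlinarith
    _ = ∫ y in a..b, J (x₀ - y) * v x₀ := (intervalIntegral.integral_mul_const _ _).symm
    _ ≤ ∫ y in a..b, J (x₀ - y) * v y := by
      refine intervalIntegral.integral_mono_on hab (hJx₀.mul_const _).intervalIntegrable ?_
        fun y hy => mul_le_mul_of_nonneg_left (hmin hy) (hJnonneg _)
      exact (intervalIntegrable_iff_integrableOn_Icc_of_le hab).2
        (hJx₀.integrableOn.mul_continuousOn hv isCompact_Icc)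

theorem nonlocal_maximum_principle_general (J : ℝ → ℝ)
    (hJnonneg : ∀ x, 0 ≤ J x)
    (hJint : ∫ x, J x = 1)
    (d T h₀ : ℝ) (hd : 0 < d)
    (u ut c : ℝ → ℝ → ℝ)
    (hu_cont : ContinuousOn (fun p : ℝ × ℝ => u p.1 p.2) (Icc 0 T ×ˢ Icc (-h₀) h₀))
    (hderiv : ∀ t ∈ Icc (0:ℝ) T, ∀ x ∈ Icc (-h₀) h₀, HasDerivAt (fun s => u s x) (ut t x) t)
    (hc_bdd : ∃ C : ℝ, ∀ t ∈ Icc (0:ℝ) T, ∀ x ∈ Icc (-h₀) h₀, |c t x| ≤ C)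
    (hineq : ∀ t ∈ Icc (0:ℝ) T, ∀ x ∈ Icc (-h₀) h₀,
      d * (∫ y in (-h₀)..h₀, J (x - y) * u t y) - d * u t x + c t x * u t x ≤ ut t x)
    (hinit : ∀ x ∈ Icc (-h₀) h₀, 0 ≤ u 0 x) :
    ∀ t ∈ Icc (0:ℝ) T, ∀ x ∈ Icc (-h₀) h₀, 0 ≤ u t x := by
  obtain ⟨C, hC⟩ := hc_bdd
  intro t₁ ht₁ x₁ hx₁
  by_contra! hneg
  have hw : ContinuousOn (fun p : ℝ × ℝ => exp (-((C + 1) * p.1)) * u p.1 p.2)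
      (Icc 0 T ×ˢ Icc (-h₀) h₀) := (Continuous.continuousOn (by fun_prop)).mul hu_cont
  obtain ⟨⟨t₀, x₀⟩, ⟨ht₀, hx₀⟩, hmin⟩ :=
    (isCompact_Icc.prod isCompact_Icc).exists_isMinOn ⟨(t₁, x₁), ht₁, hx₁⟩ hw
  simp only [isMinOn_iff, mem_prod, and_imp, Prod.forall] at hmin
  have hu₀ : u t₀ x₀ < 0 := neg_of_mul_neg_right
    ((hmin t₁ x₁ ht₁ hx₁).trans_lt (mul_neg_of_pos_of_neg (exp_pos _) hneg)) (exp_pos _).le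
  have ht₀pos : 0 < t₀ := ht₀.1.lt_of_ne (by rintro rfl; linarith [hinit x₀ hx₀])
  have htime : ut t₀ x₀ ≤ (C + 1) * u t₀ x₀ := (hderiv t₀ ht₀ x₀ hx₀).le_mul_of_isMinOn_exp_mul
    ht₀pos fun s hs => hmin s x₀ ⟨hs.1, hs.2.trans ht₀.2⟩ hx₀
  have hspace : u t₀ x₀ ≤ ∫ y in (-h₀)..h₀, J (x₀ - y) * u t₀ y :=
    le_intervalIntegral_kernel_mul_of_isMinOn (.of_integral_ne_zero (by simp [hJint]))
      hJnonneg hJint.le (hx₀.1.trans hx₀.2)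
      (hu_cont.comp (continuous_const.prodMk continuous_id).continuousOn fun y hy => ⟨ht₀, hy⟩)
      (fun y hy => le_of_mul_le_mul_left (hmin t₀ y ht₀ hy) (exp_pos _)) hu₀.le
  have hreaction : c t₀ x₀ * u t₀ x₀ ≤ ut t₀ x₀ := by
    linarith [hineq t₀ ht₀ x₀ hx₀, mul_nonneg hd.le (sub_nonneg.2 hspace)]
  have hgap : 0 < C + 1 - c t₀ x₀ := by linarith [le_of_abs_le (hC t₀ ht₀ x₀ hx₀)]
  linarith [mul_neg_of_pos_of_neg hgap hu₀]

theorem nonlocal_maximum_principle (J : ℝ → ℝ)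
    (hJcont : Continuous J) (hJnonneg : ∀ x, 0 ≤ J x)
    (hJ0 : 0 < J 0) (hJsymm : ∀ x, J (-x) = J x) (hJint : ∫ x, J x = 1)
    (d p₀ T h₀ : ℝ) (hd : 0 < d) (hp₀ : 0 < p₀) (hT : 0 < T) (hh₀ : 0 < h₀)
    (u ut c : ℝ → ℝ → ℝ)
    (hu_cont : ContinuousOn (fun p : ℝ × ℝ => u p.1 p.2) (Icc 0 T ×ˢ Icc (-h₀) h₀))
    (hut_cont : ContinuousOn (fun p : ℝ × ℝ => ut p.1 p.2) (Icc 0 T ×ˢ Icc (-h₀) h₀))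
    (hderiv : ∀ t ∈ Icc (0:ℝ) T, ∀ x ∈ Icc (-h₀) h₀, HasDerivAt (fun s => u s x) (ut t x) t)
    (hc_bdd : ∃ C : ℝ, ∀ t ∈ Icc (0:ℝ) T, ∀ x ∈ Icc (-h₀) h₀, |c t x| ≤ C)
    (hineq : ∀ t ∈ Icc (0:ℝ) T, ∀ x ∈ Icc (-h₀) h₀,
      d * (∫ y in (-h₀)..h₀, J (x - y) * u t y) - d * u t x + c t x * u t x ≤ ut t x)
    (hinit : ∀ x ∈ Icc (-h₀) h₀, 0 ≤ u 0 x) :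
    ∀ t ∈ Icc (0:ℝ) T, ∀ x ∈ Icc (-h₀) h₀, 0 ≤ u t x :=
  nonlocal_maximum_principle_general J hJnonneg hJint d T h₀ hd u ut c hu_cont hderiv hc_bdd hineq
    hinit
end

section
/- Under the hypotheses of the fixed-domain nonlocal maximum principle, if additionally u(0,·) is not identically zero on [−h₀,h₀], then u(t,x) > 0 for all t ∈ (0,T] and x ∈ [−h₀,h₀]. -/
open Real Set MeasureTheory Filter Topology

lemma helper_deriv_nonpos {f : ℝ → ℝ} {f' t₀ a : ℝ} (h : HasDerivAt f f' t₀)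
    (ha : a < t₀) (hmin : ∀ t ∈ Icc a t₀, f t₀ ≤ f t) : f' ≤ 0 := by
  have hs : Tendsto (slope f t₀) (𝓝[<] t₀) (𝓝 f') :=
    (hasDerivAt_iff_tendsto_slope.1 h).mono_left
      (nhdsWithin_mono _ (fun x hx => ne_of_lt hx))
  refine le_of_tendsto hs ?_
  filter_upwards [Ioo_mem_nhdsLT_of_mem ⟨ha, le_refl t₀⟩] with t ht
  rw [slope_def_field]
  apply div_nonpos_of_nonneg_of_nonpos
  · have := hmin t ⟨ht.1.le, ht.2.le⟩; linarith
  · linarith [ht.2]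

lemma helper_deriv_zero {f : ℝ → ℝ} {f' t₀ a : ℝ} (h : HasDerivAt f f' t₀)
    (ha : a < t₀) (hzero : ∀ t ∈ Icc a t₀, f t = 0) : f' = 0 := by
  have hs : Tendsto (slope f t₀) (𝓝[<] t₀) (𝓝 f') :=
    (hasDerivAt_iff_tendsto_slope.1 h).mono_left
      (nhdsWithin_mono _ (fun x hx => ne_of_lt hx))
  have hz : Tendsto (slope f t₀) (𝓝[<] t₀) (𝓝 0) := by
    apply Tendsto.congr' _ tendsto_const_nhds
    filter_upwards [Ioo_mem_nhdsLT_of_mem ⟨ha, le_refl t₀⟩] with t ht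
    rw [slope_def_field, hzero t ⟨ht.1.le, ht.2.le⟩, hzero t₀ ⟨ha.le, le_refl _⟩]
    simp
  exact tendsto_nhds_unique hs hz

lemma helper_integral_pos {f : ℝ → ℝ} {a b y₂ : ℝ} (hab : a < b)
    (hf : ContinuousOn f (Icc a b)) (h0 : ∀ y ∈ Icc a b, 0 ≤ f y)
    (hy₂ : y₂ ∈ Icc a b) (hpos : 0 < f y₂) : 0 < ∫ y in a..b, f y := by
  obtain ⟨η, hη, hball⟩ := Metric.continuousWithinAt_iff.1 (hf y₂ hy₂) (f y₂) hpos
  set c : ℝ := max a (y₂ - η / 2) with hc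
  set e : ℝ := min b (y₂ + η / 2) with he
  have hac : a ≤ c := le_max_left _ _
  have heb : e ≤ b := min_le_left _ _
  have hce : c < e := by
    rcases hy₂ with ⟨h1, h2⟩
    simp only [hc, he, max_lt_iff, lt_min_iff]
    constructor
    · exact ⟨hab, by linarith⟩
    · exact ⟨by linarith, by linarith⟩
  have hsub : Icc c e ⊆ Icc a b := Icc_subset_Icc hac heb
  have hposI : ∀ y ∈ Icc c e, 0 < f y := by
    intro y hy
    have hymem : y ∈ Icc a b := hsub hy
    have hdist : dist y y₂ < η := by
      rw [Real.dist_eq, abs_lt]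
      have h1 : y₂ - η / 2 ≤ c := le_max_right _ _
      have h2 : e ≤ y₂ + η / 2 := min_le_right _ _
      constructor <;> [linarith [hy.1]; linarith [hy.2]]
    have := hball hymem hdist
    rw [Real.dist_eq, abs_lt] at this
    linarith [this.1]
  have hi1 : IntervalIntegrable f volume a c :=
    (hf.mono (Icc_subset_Icc le_rfl (hce.le.trans heb))).intervalIntegrable_of_Icc hac
  have hi2 : IntervalIntegrable f volume c e :=
    (hf.mono hsub).intervalIntegrable_of_Icc hce.le
  have hi3 : IntervalIntegrable f volume e b :=
    (hf.mono (Icc_subset_Icc (hac.trans hce.le) le_rfl)).intervalIntegrable_of_Icc heb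
  have hsplit : (∫ y in a..b, f y) = (∫ y in a..c, f y) + (∫ y in c..e, f y) + ∫ y in e..b, f y := by
    rw [intervalIntegral.integral_add_adjacent_intervals hi1 hi2,
      intervalIntegral.integral_add_adjacent_intervals (hi1.trans hi2) hi3]
  have h1 : 0 ≤ ∫ y in a..c, f y :=
    intervalIntegral.integral_nonneg hac (fun y hy => h0 y ⟨hy.1, hy.2.trans (hce.le.trans heb)⟩)
  have h3 : 0 ≤ ∫ y in e..b, f y :=
    intervalIntegral.integral_nonneg heb (fun y hy => h0 y ⟨(hac.trans hce.le).trans hy.1, hy.2⟩)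
  have h2 : 0 < ∫ y in c..e, f y :=
    intervalIntegral.intervalIntegral_pos_of_pos_on hi2
      (fun y hy => hposI y ⟨hy.1.le, hy.2.le⟩) hce
  linarith [hsplit]

set_option maxHeartbeats 1000000 in
theorem nonlocal_strong_maximum_principle (J : ℝ → ℝ)
    (hJcont : Continuous J) (hJnonneg : ∀ x, 0 ≤ J x)
    (hJ0 : 0 < J 0) (hJsymm : ∀ x, J (-x) = J x) (hJint : ∫ x, J x = 1)
    (d p₀ T h₀ : ℝ) (hd : 0 < d) (hp₀ : 0 < p₀) (hT : 0 < T) (hh₀ : 0 < h₀)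
    (u ut c : ℝ → ℝ → ℝ)
    (hu_cont : ContinuousOn (fun p : ℝ × ℝ => u p.1 p.2) (Icc 0 T ×ˢ Icc (-h₀) h₀))
    (hut_cont : ContinuousOn (fun p : ℝ × ℝ => ut p.1 p.2) (Icc 0 T ×ˢ Icc (-h₀) h₀))
    (hderiv : ∀ t ∈ Icc (0:ℝ) T, ∀ x ∈ Icc (-h₀) h₀, HasDerivAt (fun s => u s x) (ut t x) t)
    (hc_bdd : ∃ C : ℝ, ∀ t ∈ Icc (0:ℝ) T, ∀ x ∈ Icc (-h₀) h₀, |c t x| ≤ C)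
    (hineq : ∀ t ∈ Icc (0:ℝ) T, ∀ x ∈ Icc (-h₀) h₀,
      d * (∫ y in (-h₀)..h₀, J (x - y) * u t y) - d * u t x + c t x * u t x ≤ ut t x)
    (hinit : ∀ x ∈ Icc (-h₀) h₀, 0 ≤ u 0 x)
    (hinit_ne : ∃ x ∈ Icc (-h₀) h₀, u 0 x ≠ 0) :
    ∀ t ∈ Ioc (0:ℝ) T, ∀ x ∈ Icc (-h₀) h₀, 0 < u t x := by
  obtain ⟨C₀, hC₀⟩ := hc_bdd
  set C : ℝ := max C₀ 0 with hCdef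
  have hC0 : (0:ℝ) ≤ C := le_max_right _ _
  have hcC : ∀ t ∈ Icc (0:ℝ) T, ∀ x ∈ Icc (-h₀) h₀, |c t x| ≤ C :=
    fun t ht x hx => (hC₀ t ht x hx).trans (le_max_left _ _)
  have hh : -h₀ ≤ h₀ := by linarith
  have hJi : Integrable J := by
    by_contra h
    rw [MeasureTheory.integral_undef h] at hJint
    exact one_ne_zero hJint.symm
  have hcx : ∀ t ∈ Icc (0:ℝ) T, ContinuousOn (fun y => u t y) (Icc (-h₀) h₀) := by
    intro t ht
    exact hu_cont.comp (Continuous.continuousOn (continuous_const.prodMk continuous_id))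
      (fun y hy => Set.mk_mem_prod ht hy)
  have hct : ∀ x ∈ Icc (-h₀) h₀, ContinuousOn (fun t => u t x) (Icc 0 T) := by
    intro x hx
    exact hu_cont.comp (Continuous.continuousOn (continuous_id.prodMk continuous_const))
      (fun t ht => Set.mk_mem_prod ht hx)
  have hker0 : ∀ x : ℝ, 0 ≤ ∫ y in (-h₀)..h₀, J (x - y) :=
    fun x => intervalIntegral.integral_nonneg hh (fun y _ => hJnonneg _)
  have hker1 : ∀ x : ℝ, (∫ y in (-h₀)..h₀, J (x - y)) ≤ 1 := by
    intro x
    rw [intervalIntegral.integral_comp_sub_left (fun z => J z) x]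
    rw [intervalIntegral.integral_of_le (by linarith : x - h₀ ≤ x - -h₀)]
    calc (∫ z in Ioc (x - h₀) (x - -h₀), J z) ≤ ∫ z, J z :=
          setIntegral_le_integral hJi (Eventually.of_forall hJnonneg)
      _ = 1 := hJint
  -- Step 1: weak maximum principle
  have step1 : ∀ t ∈ Icc (0:ℝ) T, ∀ x ∈ Icc (-h₀) h₀, 0 ≤ u t x := by
    have hwc : ContinuousOn (fun p : ℝ × ℝ => Real.exp (-(C+1) * p.1) * u p.1 p.2)
        (Icc 0 T ×ˢ Icc (-h₀) h₀) :=
      (Continuous.continuousOn (Real.continuous_exp.comp (continuous_const.mul continuous_fst))).mul hu_cont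
    have hcompact : IsCompact (Icc (0:ℝ) T ×ˢ Icc (-h₀) h₀) := isCompact_Icc.prod isCompact_Icc
    have hne : (Icc (0:ℝ) T ×ˢ Icc (-h₀) h₀).Nonempty :=
      ⟨(0, 0), Set.mk_mem_prod ⟨le_refl 0, hT.le⟩ ⟨by linarith, hh₀.le⟩⟩
    obtain ⟨⟨t₀, x₀⟩, hqmem, hqmin⟩ := hcompact.exists_isMinOn hne hwc
    simp only [Set.prodMk_mem_set_prod_eq] at hqmem
    obtain ⟨hqt, hqx⟩ := hqmem
    by_contra hcon
    push_neg at hcon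
    obtain ⟨t₁, ht₁, x₁, hx₁, hneg⟩ := hcon
    have hm : Real.exp (-(C+1) * t₀) * u t₀ x₀ < 0 := by
      have h1 := isMinOn_iff.mp hqmin (t₁, x₁) (Set.mk_mem_prod ht₁ hx₁)
      simp only at h1
      have h2 : Real.exp (-(C+1) * t₁) * u t₁ x₁ < 0 :=
        mul_neg_of_pos_of_neg (Real.exp_pos _) hneg
      exact lt_of_le_of_lt h1 h2
    have huv : u t₀ x₀ < 0 := by nlinarith [Real.exp_pos (-(C+1) * t₀)]
    have ht₀pos : 0 < t₀ := by
      rcases lt_or_eq_of_le hqt.1 with h | h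
      · exact h
      · exfalso
        have := hinit x₀ hqx
        rw [← h] at huv
        linarith
    have hd1 : HasDerivAt (fun s : ℝ => -(C+1) * s) (-(C+1)) t₀ := by
      simpa using (hasDerivAt_id t₀).const_mul (-(C+1))
    have hd3 : HasDerivAt (fun s => Real.exp (-(C+1) * s) * u s x₀)
        (Real.exp (-(C+1) * t₀) * (-(C+1)) * u t₀ x₀ + Real.exp (-(C+1) * t₀) * ut t₀ x₀) t₀ :=
      hd1.exp.mul (hderiv t₀ hqt x₀ hqx)
    have hf'le : Real.exp (-(C+1) * t₀) * (-(C+1)) * u t₀ x₀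
        + Real.exp (-(C+1) * t₀) * ut t₀ x₀ ≤ 0 := by
      refine helper_deriv_nonpos hd3 ht₀pos (fun t ht => ?_)
      have h := isMinOn_iff.mp hqmin (t, x₀)
        (Set.mk_mem_prod ⟨ht.1, ht.2.trans hqt.2⟩ hqx)
      simpa using h
    have hE : (0:ℝ) < Real.exp (-(C+1) * t₀) := Real.exp_pos _
    -- lower bound on the scaled integral
    have hIu : Real.exp (-(C+1) * t₀) * u t₀ x₀
        ≤ Real.exp (-(C+1) * t₀) * ∫ y in (-h₀)..h₀, J (x₀ - y) * u t₀ y := by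
      have heq : Real.exp (-(C+1) * t₀) * (∫ y in (-h₀)..h₀, J (x₀ - y) * u t₀ y)
          = ∫ y in (-h₀)..h₀, J (x₀ - y) * (Real.exp (-(C+1) * t₀) * u t₀ y) := by
        rw [← intervalIntegral.integral_const_mul]
        congr 1
        ext y
        ring
      rw [heq]
      have hconJ : ContinuousOn (fun y => J (x₀ - y)) (Icc (-h₀) h₀) :=
        (hJcont.comp (continuous_const.sub continuous_id)).continuousOn
      have hintL : IntervalIntegrable (fun y => J (x₀ - y)
          * (Real.exp (-(C+1) * t₀) * u t₀ y)) volume (-h₀) h₀ :=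
        (hconJ.mul ((hcx t₀ hqt).const_smul (Real.exp (-(C+1) * t₀)))).intervalIntegrable_of_Icc hh
      have hintR : IntervalIntegrable (fun y => J (x₀ - y)
          * (Real.exp (-(C+1) * t₀) * u t₀ x₀)) volume (-h₀) h₀ :=
        (hconJ.mul continuousOn_const).intervalIntegrable_of_Icc hh
      have hmono : (∫ y in (-h₀)..h₀, J (x₀ - y) * (Real.exp (-(C+1) * t₀) * u t₀ x₀))
          ≤ ∫ y in (-h₀)..h₀, J (x₀ - y) * (Real.exp (-(C+1) * t₀) * u t₀ y) := by
        apply intervalIntegral.integral_mono_on hh hintR hintL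
        intro y hy
        have hmin := isMinOn_iff.mp hqmin (t₀, y) (Set.mk_mem_prod hqt hy)
        simp only at hmin
        exact mul_le_mul_of_nonneg_left hmin (hJnonneg _)
      refine le_trans ?_ hmono
      have heq2 : (∫ y in (-h₀)..h₀, J (x₀ - y) * (Real.exp (-(C+1) * t₀) * u t₀ x₀))
          = (∫ y in (-h₀)..h₀, J (x₀ - y)) * (Real.exp (-(C+1) * t₀) * u t₀ x₀) :=
        intervalIntegral.integral_mul_const _ _
      rw [heq2]
      have := mul_le_mul_of_nonpos_right (hker1 x₀) hm.le
      linarith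
    have hsc := mul_le_mul_of_nonneg_left (hineq t₀ hqt x₀ hqx) hE.le
    have hcabs := hcC t₀ hqt x₀ hqx
    have hintA := mul_le_mul_of_nonneg_left hIu hd.le
    have hintB := mul_le_mul_of_nonpos_right ((abs_le.1 hcabs).2) hm.le
    nlinarith [hf'le, hsc, hintA, hintB, hm]
  -- Step 2: time monotonicity of exp((d+C)t) * u t x
  have step2 : ∀ x ∈ Icc (-h₀) h₀,
      MonotoneOn (fun t => Real.exp ((d + C) * t) * u t x) (Icc 0 T) := by
    intro x hx
    apply monotoneOn_of_deriv_nonneg (convex_Icc 0 T)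
    · exact (Continuous.continuousOn (Real.continuous_exp.comp (continuous_const.mul continuous_id))).mul (hct x hx)
    · intro t ht
      rw [interior_Icc] at ht
      have htm : t ∈ Icc (0:ℝ) T := ⟨ht.1.le, ht.2.le⟩
      have hda : HasDerivAt (fun s => Real.exp ((d + C) * s) * u s x)
          (Real.exp ((d + C) * t) * (d + C) * u t x + Real.exp ((d + C) * t) * ut t x) t := by
        have h1 : HasDerivAt (fun s : ℝ => (d + C) * s) (d + C) t := by
          simpa using (hasDerivAt_id t).const_mul (d + C)
        exact h1.exp.mul (hderiv t htm x hx)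
      exact hda.differentiableAt.differentiableWithinAt
    · intro t ht
      rw [interior_Icc] at ht
      have htm : t ∈ Icc (0:ℝ) T := ⟨ht.1.le, ht.2.le⟩
      have hda : HasDerivAt (fun s => Real.exp ((d + C) * s) * u s x)
          (Real.exp ((d + C) * t) * (d + C) * u t x + Real.exp ((d + C) * t) * ut t x) t := by
        have h1 : HasDerivAt (fun s : ℝ => (d + C) * s) (d + C) t := by
          simpa using (hasDerivAt_id t).const_mul (d + C)
        exact h1.exp.mul (hderiv t htm x hx)
      rw [hda.deriv]
      have hIu0 : 0 ≤ ∫ y in (-h₀)..h₀, J (x - y) * u t y :=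
        intervalIntegral.integral_nonneg hh
          (fun y hy => mul_nonneg (hJnonneg _) (step1 t htm y hy))
      have h1 := hineq t htm x hx
      have hu0 := step1 t htm x hx
      have hcv := hcC t htm x hx
      have hcu : -C * u t x ≤ c t x * u t x :=
        mul_le_mul_of_nonneg_right ((abs_le.1 hcv).1) hu0
      have hkey : 0 ≤ (d + C) * u t x + ut t x := by
        nlinarith [mul_nonneg hd.le hIu0]
      have hE : (0:ℝ) < Real.exp ((d + C) * t) := Real.exp_pos _
      nlinarith [mul_nonneg hE.le hkey]
  -- Step 3: strong positivity
  intro t₀ ht₀ x₁ hx₁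
  have ht₀m : t₀ ∈ Icc (0:ℝ) T := ⟨ht₀.1.le, ht₀.2⟩
  by_contra hcon
  have hu0' : u t₀ x₁ = 0 := le_antisymm (not_lt.1 hcon) (step1 t₀ ht₀m x₁ hx₁)
  obtain ⟨δ, hδ, hJpos⟩ : ∃ δ > 0, ∀ z : ℝ, |z| < δ → 0 < J z := by
    have hmem : {z : ℝ | 0 < J z} ∈ 𝓝 (0:ℝ) :=
      (isOpen_lt continuous_const hJcont).mem_nhds hJ0
    obtain ⟨δ, hδ, hball⟩ := Metric.mem_nhds_iff.1 hmem
    exact ⟨δ, hδ, fun z hz => hball (by simpa [Real.dist_eq] using hz)⟩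
  have key : ∀ x' ∈ Icc (-h₀) h₀, u t₀ x' = 0 →
      ∀ y ∈ Icc (-h₀) h₀, |x' - y| < δ → u t₀ y = 0 := by
    intro x' hx' hx'0 y hy hyd
    have hz : ∀ s ∈ Icc (0:ℝ) t₀, u s x' = 0 := by
      intro s hs
      have hsm : s ∈ Icc (0:ℝ) T := ⟨hs.1, hs.2.trans ht₀.2⟩
      have hmono := step2 x' hx' hsm ht₀m hs.2
      simp only at hmono
      rw [hx'0, mul_zero] at hmono
      have h2 := step1 s hsm x' hx'
      nlinarith [Real.exp_pos ((d + C) * s)]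
    have hut0 : ut t₀ x' = 0 :=
      helper_deriv_zero (hderiv t₀ ht₀m x' hx') ht₀.1 hz
    have hIle : (∫ y in (-h₀)..h₀, J (x' - y) * u t₀ y) ≤ 0 := by
      have h1 := hineq t₀ ht₀m x' hx'
      rw [hx'0, hut0] at h1
      nlinarith
    by_contra hy0
    have hypos : 0 < u t₀ y := lt_of_le_of_ne (step1 t₀ ht₀m y hy) (Ne.symm hy0)
    have hIpos : 0 < ∫ y in (-h₀)..h₀, J (x' - y) * u t₀ y := by
      apply helper_integral_pos (by linarith : -h₀ < h₀)
        (((hJcont.comp (continuous_const.sub continuous_id)).continuousOn).mul (hcx t₀ ht₀m))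
        (fun z hz => mul_nonneg (hJnonneg _) (step1 t₀ ht₀m z hz)) hy
      exact mul_pos (hJpos _ hyd) hypos
    linarith
  haveI : PreconnectedSpace (Icc (-h₀) h₀) := Subtype.preconnectedSpace isPreconnected_Icc
  have hucont' : Continuous (fun x : Icc (-h₀) h₀ => u t₀ (↑x : ℝ)) := by
    apply hu_cont.comp_continuous (continuous_const.prodMk continuous_subtype_val)
    exact fun x => Set.mk_mem_prod ht₀m x.2
  have hClosed : IsClosed {x : Icc (-h₀) h₀ | u t₀ ↑x = 0} :=
    isClosed_eq hucont' continuous_const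
  have hOpen : IsOpen {x : Icc (-h₀) h₀ | u t₀ ↑x = 0} := by
    rw [Metric.isOpen_iff]
    intro x hxS
    refine ⟨δ, hδ, fun y hyB => ?_⟩
    have hdxy : dist (y : ℝ) (x : ℝ) < δ := by
      rw [← Subtype.dist_eq]; exact hyB
    apply key ↑x x.2 hxS ↑y y.2
    rw [Real.dist_eq] at hdxy
    rw [abs_sub_comm]
    exact hdxy
  have hSuniv : {x : Icc (-h₀) h₀ | u t₀ ↑x = 0} = univ :=
    IsClopen.eq_univ ⟨hClosed, hOpen⟩ ⟨⟨x₁, hx₁⟩, hu0'⟩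
  obtain ⟨x₀, hx₀, hx₀ne⟩ := hinit_ne
  have hx₀pos : 0 < u 0 x₀ := lt_of_le_of_ne (hinit x₀ hx₀) (Ne.symm hx₀ne)
  have hx₀S : u t₀ x₀ = 0 := by
    have hmem : (⟨x₀, hx₀⟩ : Icc (-h₀) h₀) ∈ {x : Icc (-h₀) h₀ | u t₀ ↑x = 0} := by
      rw [hSuniv]; exact mem_univ _
    exact hmem
  have hmono := step2 x₀ hx₀ ⟨le_refl 0, hT.le⟩ ht₀m ht₀.1.le
  simp only at hmono
  rw [hx₀S, mul_zero, mul_zero, Real.exp_zero, one_mul] at hmono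
  linarith
end

section
/- Let (u₁, v₁) solve the planar Lotka–Volterra competition ODE system u' = u(a₁ − b₁u − c₁v), v' = v(a₂ − b₂u − c₂v) with positive parameters satisfying a₁/a₂ < min{b₁/b₂, c₁/c₂} and positive initial data. Then (u₁(t), v₁(t)) → (0, a₂/c₂) as t → ∞. -/
/-!
Each species solves `x' = x r` with a continuous rate `r`, hence stays positive, and the logistic
comparisons `u' ≤ u (a₁ - b₁ u)`, `v' ≤ v (a₂ - c₂ v)` bound both species eventually.
Since `a₁ / b₁ < a₂ / b₂`, eventually `u ≤ K < a₂ / b₂`, which keeps `v` above some `k > 0`.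
With `σ = a₁ / a₂`, the derivative of `log u - σ log v` is
`-(b₁ - σ b₂) u - (c₁ - σ c₂) v ≤ -(c₁ - σ c₂) k < 0`, so `log u → -∞` as `v` stays bounded.
Finally `v` solves a logistic equation whose rate `a₂ - b₂ u` tends to `a₂`, so `v → a₂ / c₂`.
-/

open Real Set Filter Topology

theorem tendsto_atBot_of_hasDerivAt_le_neg {x d : ℝ → ℝ} {δ : ℝ} (hδ : 0 < δ)
    (hx : ∀ᶠ t in atTop, HasDerivAt x (d t) t) (hd : ∀ᶠ t in atTop, d t ≤ -δ) :
    Tendsto x atTop atBot := by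
  obtain ⟨a, ha⟩ := eventually_atTop.1 (hx.and hd)
  have hlin : ∀ t, a ≤ t → x t ≤ x a + -δ * (t - a) := fun t ht => by
    have := (convex_Ici a).image_sub_le_mul_sub_of_deriv_le
      (fun s hs => (ha s hs).1.continuousAt.continuousWithinAt)
      (fun s hs => (ha s (interior_subset hs)).1.differentiableAt.differentiableWithinAt)
      (fun s hs => (ha s (interior_subset hs)).1.deriv.trans_le (ha s (interior_subset hs)).2)
      a self_mem_Ici t ht ht
    linarith
  refine tendsto_atBot_mono' atTop (eventually_atTop.2 ⟨a, hlin⟩) ?_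
  exact tendsto_atBot_add_const_left _ _
    ((tendsto_id.atTop_add tendsto_const_nhds).const_mul_atTop_of_neg (neg_neg_iff_pos.2 hδ))

theorem eventually_le_of_hasDerivAt_le_neg {x d : ℝ → ℝ} {K δ : ℝ} (hδ : 0 < δ)
    (hx : ∀ᶠ t in atTop, HasDerivAt x (d t) t) (hd : ∀ᶠ t in atTop, K ≤ x t → d t ≤ -δ) :
    ∀ᶠ t in atTop, x t ≤ K := by
  obtain ⟨a, ha⟩ := eventually_atTop.1 (hx.and hd)
  by_cases hhit : ∃ t₀, a ≤ t₀ ∧ x t₀ ≤ K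
  · obtain ⟨t₀, hat₀, hxt₀⟩ := hhit
    refine eventually_atTop.2 ⟨t₀, fun t ht => ?_⟩
    refine image_le_of_deriv_right_lt_deriv_boundary (B := fun _ => K) (B' := fun _ => 0)
      (fun s hs => (ha s (hat₀.trans hs.1)).1.continuousAt.continuousWithinAt)
      (fun s hs => (ha s (hat₀.trans hs.1)).1.hasDerivWithinAt) hxt₀
      (fun s => hasDerivAt_const s K) (fun s hs hsK => ?_) (right_mem_Icc.2 ht)
    linarith [(ha s (hat₀.trans hs.1)).2 hsK.ge]
  · push Not at hhit
    have hbot := tendsto_atBot_of_hasDerivAt_le_neg hδ hx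
      (eventually_atTop.2 ⟨a, fun t ht => (ha t ht).2 (hhit t ht).le⟩)
    obtain ⟨t, hxt, hat⟩ := ((hbot.eventually_lt_atBot K).and (eventually_ge_atTop a)).exists
    exact (lt_asymm hxt (hhit t hat)).elim

theorem eventually_ge_of_hasDerivAt_ge {x d : ℝ → ℝ} {K δ : ℝ} (hδ : 0 < δ)
    (hx : ∀ᶠ t in atTop, HasDerivAt x (d t) t) (hd : ∀ᶠ t in atTop, x t ≤ K → δ ≤ d t) :
    ∀ᶠ t in atTop, K ≤ x t := by
  have := eventually_le_of_hasDerivAt_le_neg (x := -x) (d := -d) (K := -K) hδ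
    (hx.mono fun t h => h.neg) (hd.mono fun t h hK => neg_le_neg (h (neg_le_neg_iff.1 hK)))
  exact this.mono fun t h => neg_le_neg_iff.1 h

theorem eq_mul_exp_integral_of_hasDerivAt_mul {x r : ℝ → ℝ} {t₀ : ℝ}
    (hr : ContinuousOn r (Ici t₀)) (hx : ∀ t, t₀ ≤ t → HasDerivAt x (x t * r t) t) :
    ∀ t, t₀ ≤ t → x t = x t₀ * exp (∫ s in t₀..t, r s) := by
  set f : ℝ → ℝ := fun t => r (max t t₀)
  have hf : Continuous f :=
    hr.comp_continuous (continuous_id.max continuous_const) fun t => le_max_right t t₀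
  have hfr : ∀ t, t₀ ≤ t → f t = r t := fun t ht => by simp only [f, max_eq_left ht]
  set F : ℝ → ℝ := fun t => ∫ s in t₀..t, f s
  have hF : ∀ t, HasDerivAt F (f t) t := fun t => (hf.integral_hasStrictDerivAt t₀ t).hasDerivAt
  intro t ht
  -- the integrating factor `exp (-F)` makes `x` constant
  have hy : ∀ s ∈ Icc t₀ t, x s * exp (-F s) = x t₀ * exp (-F t₀) := by
    refine constant_of_has_deriv_right_zero (fun s hs => ?_) (fun s hs => ?_)
    · exact ((hx s hs.1).continuousAt.mul (hF s).neg.exp.continuousAt).continuousWithinAt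
    · have : HasDerivAt (fun s => x s * exp (-F s))
          (x s * r s * exp (-F s) + x s * (exp (-F s) * -f s)) s := (hx s hs.1).mul (hF s).neg.exp
      rw [hfr s hs.1] at this
      convert this.hasDerivWithinAt using 1
      ring
  have hFt : F t = ∫ s in t₀..t, r s :=
    intervalIntegral.integral_congr fun s hs => hfr s (by rw [uIcc_of_le ht] at hs; exact hs.1)
  have := hy t (right_mem_Icc.2 ht)
  simp only [F, intervalIntegral.integral_same, neg_zero, exp_zero, mul_one] at this
  rw [← hFt, ← this, mul_assoc, ← exp_add, neg_add_cancel, exp_zero, mul_one]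

theorem pos_of_hasDerivAt_mul {x r : ℝ → ℝ} {t₀ : ℝ} (hr : ContinuousOn r (Ici t₀))
    (hx : ∀ t, t₀ ≤ t → HasDerivAt x (x t * r t) t) (hx₀ : 0 < x t₀) :
    ∀ t, t₀ ≤ t → 0 < x t := fun t ht =>
  (eq_mul_exp_integral_of_hasDerivAt_mul hr hx t ht) ▸ mul_pos hx₀ (exp_pos _)

theorem hasDerivAt_log_of_hasDerivAt_mul {x : ℝ → ℝ} {r t : ℝ} (hpos : 0 < x t)
    (hx : HasDerivAt x (x t * r) t) : HasDerivAt (fun s => log (x s)) r t := by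
  simpa only [mul_div_cancel_left₀ _ hpos.ne'] using hx.log hpos.ne'

section Rate

variable {x r : ℝ → ℝ}

theorem eventually_le_of_rate_le {a c K : ℝ} (hc : 0 ≤ c) (hK : 0 < K) (hcK : a < c * K)
    (hx : ∀ᶠ t in atTop, 0 < x t ∧ HasDerivAt x (x t * r t) t)
    (hr : ∀ᶠ t in atTop, r t ≤ a - c * x t) : ∀ᶠ t in atTop, x t ≤ K := by
  have hlog := eventually_le_of_hasDerivAt_le_neg (x := fun t => log (x t)) (K := log K)
    (sub_pos.2 hcK) (hx.mono fun t h => hasDerivAt_log_of_hasDerivAt_mul h.1 h.2)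
    ((hx.and hr).mono fun t h hKx => by
      have := mul_le_mul_of_nonneg_left ((log_le_log_iff hK h.1.1).1 hKx) hc
      linarith [h.2])
  filter_upwards [hx, hlog] with t h hl
  exact (log_le_log_iff h.1 hK).1 hl

theorem eventually_ge_of_rate_ge {a c K : ℝ} (hc : 0 ≤ c) (hcK : c * K < a)
    (hx : ∀ᶠ t in atTop, 0 < x t ∧ HasDerivAt x (x t * r t) t)
    (hr : ∀ᶠ t in atTop, a - c * x t ≤ r t) : ∀ᶠ t in atTop, K ≤ x t := by
  rcases le_or_gt K 0 with hK | hK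
  · exact hx.mono fun t h => hK.trans h.1.le
  have hlog := eventually_ge_of_hasDerivAt_ge (x := fun t => log (x t)) (K := log K)
    (sub_pos.2 hcK) (hx.mono fun t h => hasDerivAt_log_of_hasDerivAt_mul h.1 h.2)
    ((hx.and hr).mono fun t h hxK => by
      have := mul_le_mul_of_nonneg_left ((log_le_log_iff h.1.1 hK).1 hxK) hc
      linarith [h.2])
  filter_upwards [hx, hlog] with t h hl
  exact (log_le_log_iff hK h.1).1 hl

theorem tendsto_of_rate_tendsto {ρ : ℝ → ℝ} {a c : ℝ} (ha : 0 ≤ a) (hc : 0 < c)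
    (hx : ∀ᶠ t in atTop, 0 < x t ∧ HasDerivAt x (x t * (ρ t - c * x t)) t)
    (hρ : Tendsto ρ atTop (𝓝 a)) : Tendsto x atTop (𝓝 (a / c)) := by
  refine tendsto_order.2 ⟨fun K hK => ?_, fun K hK => ?_⟩
  · obtain ⟨K', hKK', hK'⟩ := exists_between hK
    obtain ⟨a', hKa', ha'⟩ := exists_between ((lt_div_iff₀' hc).1 hK')
    refine (eventually_ge_of_rate_ge hc.le hKa' hx ?_).mono fun t h => hKK'.trans_le h
    exact (hρ.eventually_const_lt ha').mono fun t h => by linarith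
  · obtain ⟨K', hK', hK'K⟩ := exists_between hK
    obtain ⟨a', ha', hKa'⟩ := exists_between ((div_lt_iff₀' hc).1 hK')
    refine (eventually_le_of_rate_le hc.le ((div_nonneg ha hc.le).trans_lt hK') hKa' hx ?_).mono
      fun t h => h.trans_lt hK'K
    exact (hρ.eventually_lt_const ha').mono fun t h => by linarith

end Rate

theorem tendsto_zero_of_rate_sub_le {x y r s : ℝ → ℝ} {σ δ M : ℝ} (hσ : 0 ≤ σ) (hδ : 0 < δ)
    (hx : ∀ᶠ t in atTop, 0 < x t ∧ HasDerivAt x (x t * r t) t)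
    (hy : ∀ᶠ t in atTop, 0 < y t ∧ HasDerivAt y (y t * s t) t) (hyM : ∀ᶠ t in atTop, y t ≤ M)
    (hrs : ∀ᶠ t in atTop, r t - σ * s t ≤ -δ) : Tendsto x atTop (𝓝 0) := by
  have hw : Tendsto (fun t => log (x t) - σ * log (y t)) atTop atBot :=
    tendsto_atBot_of_hasDerivAt_le_neg hδ ((hx.and hy).mono fun t h =>
      (hasDerivAt_log_of_hasDerivAt_mul h.1.1 h.1.2).sub
        ((hasDerivAt_log_of_hasDerivAt_mul h.2.1 h.2.2).const_mul σ)) hrs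
  have hlog : Tendsto (fun t => log (x t)) atTop atBot := by
    refine tendsto_atBot_mono' atTop ?_ (tendsto_atBot_add_const_right _ (σ * log M) hw)
    filter_upwards [hy, hyM] with t h hM
    linarith [mul_le_mul_of_nonneg_left (log_le_log h.1 hM) hσ]
  refine (tendsto_exp_atBot.comp hlog).congr' ?_
  filter_upwards [hx] with t h
  exact exp_log h.1

theorem tendsto_zero_of_lotkaVolterra_inferior {a₁ a₂ b₁ b₂ c₁ c₂ : ℝ} {u v : ℝ → ℝ}
    (ha₁ : 0 < a₁) (ha₂ : 0 < a₂) (hb₁ : 0 < b₁) (hb₂ : 0 < b₂) (hc₁ : 0 < c₁) (hc₂ : 0 < c₂)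
    (hab : a₁ / a₂ * b₂ < b₁) (hac : a₁ / a₂ * c₂ < c₁)
    (hu : ∀ᶠ t in atTop, 0 < u t ∧ HasDerivAt u (u t * (a₁ - b₁ * u t - c₁ * v t)) t)
    (hv : ∀ᶠ t in atTop, 0 < v t ∧ HasDerivAt v (v t * (a₂ - b₂ * u t - c₂ * v t)) t) :
    Tendsto u atTop (𝓝 0) := by
  obtain ⟨K, hK₁, hK₂⟩ : ∃ K, a₁ / b₁ < K ∧ K < a₂ / b₂ := exists_between <| by
    rw [div_mul_eq_mul_div, div_lt_iff₀ ha₂] at hab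
    rw [div_lt_div_iff₀ hb₁ hb₂]
    linarith
  have hu_le : ∀ᶠ t in atTop, u t ≤ K :=
    eventually_le_of_rate_le hb₁.le ((div_pos ha₁ hb₁).trans hK₁) ((div_lt_iff₀' hb₁).1 hK₁)
      hu (hv.mono fun t h => by linarith [mul_pos hc₁ h.1])
  have hv_le : ∀ᶠ t in atTop, v t ≤ a₂ / c₂ + 1 :=
    eventually_le_of_rate_le (a := a₂) hc₂.le (by positivity)
      (by rw [mul_add, mul_div_cancel₀ _ hc₂.ne']; linarith)
      hv (hu.mono fun t h => by linarith [mul_pos hb₂ h.1])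
  obtain ⟨k, hk₀, hk⟩ : ∃ k, 0 < k ∧ k < (a₂ - b₂ * K) / c₂ :=
    exists_between (div_pos (by linarith [(lt_div_iff₀' hb₂).1 hK₂]) hc₂)
  have hv_ge : ∀ᶠ t in atTop, k ≤ v t :=
    eventually_ge_of_rate_ge hc₂.le ((lt_div_iff₀' hc₂).1 hk) hv
      (hu_le.mono fun t h => by linarith [mul_le_mul_of_nonneg_left h hb₂.le])
  -- `log u - (a₁ / a₂) log v` is a Lyapunov function: the `a`-terms of its derivative cancel
  refine tendsto_zero_of_rate_sub_le (div_pos ha₁ ha₂).le (mul_pos (sub_pos.2 hac) hk₀)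
    hu hv hv_le ?_
  filter_upwards [hu, hv_ge] with t hut hvt
  have ha_cancel : a₁ / a₂ * a₂ = a₁ := div_mul_cancel₀ _ ha₂.ne'
  nlinarith [mul_le_mul_of_nonneg_left hvt (sub_pos.2 hac).le, mul_pos (sub_pos.2 hab) hut.1]

theorem lotka_volterra_inferior_competitor
    (a₁ a₂ b₁ b₂ c₁ c₂ : ℝ)
    (ha₁ : 0 < a₁) (ha₂ : 0 < a₂) (hb₁ : 0 < b₁) (hb₂ : 0 < b₂)
    (hc₁ : 0 < c₁) (hc₂ : 0 < c₂)
    (hinf : a₁ / a₂ < min (b₁ / b₂) (c₁ / c₂))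
    (u v : ℝ → ℝ)
    (hu : ∀ t, 0 ≤ t → HasDerivAt u (u t * (a₁ - b₁ * u t - c₁ * v t)) t)
    (hv : ∀ t, 0 ≤ t → HasDerivAt v (v t * (a₂ - b₂ * u t - c₂ * v t)) t)
    (hu0 : 0 < u 0) (hv0 : 0 < v 0) :
    Tendsto u atTop (nhds 0) ∧ Tendsto v atTop (nhds (a₂ / c₂)) := by
  have hu_cont : ContinuousOn u (Ici 0) := fun t ht => (hu t ht).continuousAt.continuousWithinAt
  have hv_cont : ContinuousOn v (Ici 0) := fun t ht => (hv t ht).continuousAt.continuousWithinAt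
  have hu_sol : ∀ᶠ t in atTop, 0 < u t ∧ HasDerivAt u (u t * (a₁ - b₁ * u t - c₁ * v t)) t :=
    eventually_atTop.2 ⟨0, fun t ht => ⟨pos_of_hasDerivAt_mul (by fun_prop) hu hu0 t ht, hu t ht⟩⟩
  have hv_sol : ∀ᶠ t in atTop, 0 < v t ∧ HasDerivAt v (v t * (a₂ - b₂ * u t - c₂ * v t)) t :=
    eventually_atTop.2 ⟨0, fun t ht => ⟨pos_of_hasDerivAt_mul (by fun_prop) hv hv0 t ht, hv t ht⟩⟩
  have hu_lim : Tendsto u atTop (𝓝 0) :=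
    tendsto_zero_of_lotkaVolterra_inferior ha₁ ha₂ hb₁ hb₂ hc₁ hc₂
      ((lt_div_iff₀ hb₂).1 (hinf.trans_le (min_le_left _ _)))
      ((lt_div_iff₀ hc₂).1 (hinf.trans_le (min_le_right _ _))) hu_sol hv_sol
  refine ⟨hu_lim, tendsto_of_rate_tendsto (ρ := fun t => a₂ - b₂ * u t) ha₂.le hc₂ hv_sol ?_⟩
  simpa using tendsto_const_nhds.sub (hu_lim.const_mul b₂)
end

section
/- Let (u₂, v₂) solve the planar Lotka–Volterra competition ODE system u' = u(a₁ − b₁u − c₁v), v' = v(a₂ − b₂u − c₂v) with positive parameters satisfying a₁/a₂ > max{b₁/b₂, c₁/c₂} and positive initial data. Then (u₂(t), v₂(t)) → (a₁/b₁, 0) as t → ∞. -/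
open Real Set Filter Topology

/-!
Both populations stay positive, by backward uniqueness for the linear equation `f' = f g`.
With `l := min (b₂ / b₁) (c₂ / c₁)` the hypothesis reads `a₂ < l a₁`, and `log v - l log u` then
decreases at least at the rate `l a₁ - a₂ > 0`; as `u` is bounded, `v → 0` exponentially. Finally
`u` solves a logistic equation `u' = u (a₁ - b₁ u - e)` with a vanishing perturbation `e = c₁ v`,
and on either side of `a₁ / b₁` the drift of `log u` is bounded away from zero.
-/

lemma HasDerivAt.log_of_self_mul {f : ℝ → ℝ} {g t : ℝ} (hf : HasDerivAt f (f t * g) t)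
    (ht : f t ≠ 0) : HasDerivAt (fun s => Real.log (f s)) g t := by
  simpa [mul_div_cancel_left₀ g ht] using hf.log ht

section Positivity

variable {f g : ℝ → ℝ} {a : ℝ}

/-- Read backwards from a zero, `f` solves a linear equation with bounded coefficient, so Grönwall
forces it to vanish at `a` too. -/
lemma ne_zero_of_hasDerivAt_self_mul (hf : ∀ t ≥ a, HasDerivAt f (f t * g t) t)
    (hg : ContinuousOn g (Ici a)) (ha : f a ≠ 0) : ∀ t ≥ a, f t ≠ 0 := by
  intro t₀ ht₀ hzero
  obtain ⟨C, hC⟩ := isCompact_Icc.exists_bound_of_continuousOn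
    (hg.mono Icc_subset_Ici_self : ContinuousOn g (Icc a t₀))
  have hmem : ∀ s ∈ Icc 0 (t₀ - a), t₀ - s ∈ Icc a t₀ := fun s hs =>
    ⟨by linarith [hs.2], by linarith [hs.1]⟩
  have hrev : ∀ s ∈ Icc 0 (t₀ - a),
      HasDerivAt (fun s => f (t₀ - s)) (-(f (t₀ - s) * g (t₀ - s))) s := fun s hs =>
    (hf _ (hmem s hs).1).comp_const_sub t₀ s
  have hvanish := eq_zero_of_abs_deriv_le_mul_abs_self_of_eq_zero_right (K := C)
    (fun s hs => (hrev s hs).continuousAt.continuousWithinAt)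
    (fun s hs => (hrev s (Ico_subset_Icc_self hs)).hasDerivWithinAt) (by simpa using hzero)
    (fun s hs => by
      rw [norm_neg, norm_mul, mul_comm C]
      exact mul_le_mul_of_nonneg_left (hC _ (hmem s (Ico_subset_Icc_self hs))) (norm_nonneg _))
    (t₀ - a) ⟨by linarith, le_rfl⟩
  exact ha (by simpa using hvanish)

lemma pos_of_hasDerivAt_self_mul (hf : ∀ t ≥ a, HasDerivAt f (f t * g t) t)
    (hg : ContinuousOn g (Ici a)) (ha : 0 < f a) : ∀ t ≥ a, 0 < f t := by
  intro t ht
  by_contra! hle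
  obtain ⟨z, hz, hfz⟩ := intermediate_value_Icc' ht
    (fun x hx => (hf x hx.1).continuousAt.continuousWithinAt) ⟨hle, ha.le⟩
  exact ne_zero_of_hasDerivAt_self_mul hf hg ha.ne' z hz.1 hfz

end Positivity

section Comparison

variable {f f' : ℝ → ℝ} {T c δ : ℝ}

lemma le_sub_mul_of_hasDerivAt_le (hf : ∀ t ≥ T, HasDerivAt f (f' t) t)
    (h : ∀ t ≥ T, f' t ≤ -δ) : ∀ t ≥ T, f t ≤ f T - δ * (t - T) := fun t ht =>
  image_le_of_deriv_right_le_deriv_boundary (B := fun s => f T - δ * (s - T)) (B' := fun _ => -δ)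
    (fun s hs => (hf s hs.1).continuousAt.continuousWithinAt)
    (fun s hs => (hf s hs.1).hasDerivWithinAt) (by simp) (by fun_prop)
    (fun s _ => by
      simpa using ((((hasDerivAt_id s).sub_const T).const_mul δ).const_sub (f T)).hasDerivWithinAt)
    (fun s hs => h s hs.1) ⟨ht, le_rfl⟩

lemma le_of_hasDerivAt_neg_of_eq (hf : ∀ t ≥ T, HasDerivAt f (f' t) t)
    (h : ∀ t ≥ T, f t = c → f' t < 0) (hT : f T ≤ c) : ∀ t ≥ T, f t ≤ c := fun _ ht =>
  image_le_of_deriv_right_lt_deriv_boundary (B := fun _ => c) (B' := 0)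
    (fun s hs => (hf s hs.1).continuousAt.continuousWithinAt)
    (fun s hs => (hf s hs.1).hasDerivWithinAt) hT (fun _ => hasDerivAt_const _ _)
    (fun s hs => h s hs.1) ⟨ht, le_rfl⟩

lemma eventually_le_of_hasDerivAt_le_neg_s11 (hδ : 0 < δ)
    (hf : ∀ᶠ t in atTop, HasDerivAt f (f' t) t) (h : ∀ᶠ t in atTop, c ≤ f t → f' t ≤ -δ) :
    ∀ᶠ t in atTop, f t ≤ c := by
  obtain ⟨T, hT⟩ := eventually_atTop.1 (hf.and h)
  obtain ⟨t₀, ht₀, hft₀⟩ : ∃ t₀ ≥ T, f t₀ ≤ c := by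
    by_contra! hgt
    have hdecay := le_sub_mul_of_hasDerivAt_le (fun t ht => (hT t ht).1)
      (fun t ht => (hT t ht).2 (hgt t ht).le)
    set τ := T + (f T - c) / δ
    have hτ : T ≤ τ := le_add_of_nonneg_right (div_nonneg (sub_nonneg.2 (hgt T le_rfl).le) hδ.le)
    have hdrop : δ * (τ - T) = f T - c := by simp [τ, mul_div_cancel₀ _ hδ.ne']
    linarith [hdecay τ hτ, hgt τ hτ]
  exact eventually_atTop.2 ⟨t₀, le_of_hasDerivAt_neg_of_eq (fun t ht => (hT t (ht₀.trans ht)).1)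
    (fun t ht heq => by linarith [(hT t (ht₀.trans ht)).2 heq.ge]) hft₀⟩

lemma eventually_ge_of_hasDerivAt_ge_pos (hδ : 0 < δ)
    (hf : ∀ᶠ t in atTop, HasDerivAt f (f' t) t) (h : ∀ᶠ t in atTop, f t ≤ c → δ ≤ f' t) :
    ∀ᶠ t in atTop, c ≤ f t := by
  have := eventually_le_of_hasDerivAt_le_neg_s11 (f := fun t => -f t) (f' := fun t => -f' t) (c := -c)
    hδ (hf.mono fun t h => h.neg) (h.mono fun t h hle => by linarith [h (by linarith)])
  exact this.mono fun t h => by linarith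

end Comparison

section Logistic

variable {u e : ℝ → ℝ} {a b : ℝ}

lemma le_max_of_hasDerivAt_logistic (hb : 0 < b) (hpos : ∀ t ≥ 0, 0 < u t)
    (he : ∀ t ≥ 0, 0 < e t) (hu : ∀ t ≥ 0, HasDerivAt u (u t * (a - b * u t - e t)) t) :
    ∀ t ≥ 0, u t ≤ max (u 0) (a / b) :=
  le_of_hasDerivAt_neg_of_eq hu (fun t ht heq => by
    have hgrowth : a - b * u t - e t < 0 := by
      have := (div_le_iff₀' hb).1 (heq ▸ le_max_right (u 0) (a / b))
      linarith [he t ht]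
    exact mul_neg_of_pos_of_neg (hpos t ht) hgrowth) (le_max_left _ _)

theorem tendsto_of_hasDerivAt_logistic (ha : 0 < a) (hb : 0 < b)
    (hpos : ∀ᶠ t in atTop, 0 < u t)
    (hu : ∀ᶠ t in atTop, HasDerivAt u (u t * (a - b * u t - e t)) t)
    (he : Tendsto e atTop (𝓝 0)) : Tendsto u atTop (𝓝 (a / b)) := by
  have hlog : ∀ᶠ t in atTop, HasDerivAt (fun s => log (u s)) (a - b * u t - e t) t :=
    (hpos.and hu).mono fun t h => h.2.log_of_self_mul h.1.ne'
  have hLpos : 0 < a / b := div_pos ha hb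
  refine tendsto_order.2 ⟨fun c hc => ?_, fun c hc => ?_⟩
  · obtain ⟨c', hcc', hc'L⟩ := exists_between (max_lt hc hLpos)
    have hc' : 0 < c' := (le_max_right c 0).trans_lt hcc'
    have hδ : 0 < (a - b * c') / 2 := by linarith [(lt_div_iff₀' hb).1 hc'L]
    have hlow := eventually_ge_of_hasDerivAt_ge_pos hδ hlog <| by
      filter_upwards [hpos, he.eventually_lt_const hδ] with t hut het hle
      linarith [mul_le_mul_of_nonneg_left ((log_le_log_iff hut hc').1 hle) hb.le]
    filter_upwards [hlow, hpos] with t hle hut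
    exact ((le_max_left c 0).trans_lt hcc').trans_le ((log_le_log_iff hc' hut).1 hle)
  · obtain ⟨c', hLc', hc'c⟩ := exists_between hc
    have hc' : 0 < c' := hLpos.trans hLc'
    have hδ : 0 < (b * c' - a) / 2 := by linarith [(div_lt_iff₀' hb).1 hLc']
    have hup := eventually_le_of_hasDerivAt_le_neg_s11 hδ hlog <| by
      filter_upwards [hpos, he.eventually_const_lt (neg_neg_of_pos hδ)] with t hut het hle
      linarith [mul_le_mul_of_nonneg_left ((log_le_log_iff hc' hut).1 hle) hb.le]
    filter_upwards [hup, hpos] with t hle hut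
    exact ((log_le_log_iff hut hc').1 hle).trans_lt hc'c

end Logistic

theorem tendsto_zero_of_competitive_exclusion {a₁ a₂ b₁ b₂ c₁ c₂ l M : ℝ} {u v : ℝ → ℝ}
    (hl : 0 ≤ l) (ha : a₂ < l * a₁) (hb : l * b₁ ≤ b₂) (hc : l * c₁ ≤ c₂)
    (hu_pos : ∀ t ≥ 0, 0 < u t) (hv_pos : ∀ t ≥ 0, 0 < v t) (hu_le : ∀ t ≥ 0, u t ≤ M)
    (hu : ∀ t ≥ 0, HasDerivAt u (u t * (a₁ - b₁ * u t - c₁ * v t)) t)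
    (hv : ∀ t ≥ 0, HasDerivAt v (v t * (a₂ - b₂ * u t - c₂ * v t)) t) :
    Tendsto v atTop (𝓝 0) := by
  set W : ℝ → ℝ := fun t => log (v t) - l * log (u t)
  have hW := le_sub_mul_of_hasDerivAt_le (f := W) (δ := l * a₁ - a₂) (fun t ht =>
      ((hv t ht).log_of_self_mul (hv_pos t ht).ne').sub
        (((hu t ht).log_of_self_mul (hu_pos t ht).ne').const_mul l))
    (fun t ht => by nlinarith [hu_pos t ht, hv_pos t ht])
  have hlogv : ∀ t ≥ 0, log (v t) ≤ W 0 + l * log M - (l * a₁ - a₂) * t := fun t ht => by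
    have hlogu := mul_le_mul_of_nonneg_left (log_le_log (hu_pos t ht) (hu_le t ht)) hl
    have hWt := hW t ht
    simp only [W, sub_zero] at hWt ⊢
    linarith
  have hlinear : Tendsto (fun t => W 0 + l * log M - (l * a₁ - a₂) * t) atTop atBot := by
    simpa [sub_eq_add_neg] using tendsto_atBot_add_const_left _ (W 0 + l * log M)
      (tendsto_neg_atTop_atBot.comp (tendsto_id.const_mul_atTop (sub_pos.2 ha)))
  have hlogv_lim := tendsto_atBot_mono' _ (eventually_atTop.2 ⟨0, hlogv⟩) hlinear
  exact (tendsto_exp_atBot.comp hlogv_lim).congr'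
    (eventually_atTop.2 ⟨0, fun t ht => exp_log (hv_pos t ht)⟩)

theorem lotka_volterra_superior_competitor
    (a₁ a₂ b₁ b₂ c₁ c₂ : ℝ)
    (ha₁ : 0 < a₁) (ha₂ : 0 < a₂) (hb₁ : 0 < b₁) (hb₂ : 0 < b₂)
    (hc₁ : 0 < c₁) (hc₂ : 0 < c₂)
    (hsup : max (b₁ / b₂) (c₁ / c₂) < a₁ / a₂)
    (u v : ℝ → ℝ)
    (hu : ∀ t, 0 ≤ t → HasDerivAt u (u t * (a₁ - b₁ * u t - c₁ * v t)) t)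
    (hv : ∀ t, 0 ≤ t → HasDerivAt v (v t * (a₂ - b₂ * u t - c₂ * v t)) t)
    (hu0 : 0 < u 0) (hv0 : 0 < v 0) :
    Tendsto u atTop (nhds (a₁ / b₁)) ∧ Tendsto v atTop (nhds 0) := by
  have hu_cont : ContinuousOn u (Ici 0) := fun t ht => (hu t ht).continuousAt.continuousWithinAt
  have hv_cont : ContinuousOn v (Ici 0) := fun t ht => (hv t ht).continuousAt.continuousWithinAt
  have hu_pos := pos_of_hasDerivAt_self_mul hu (by fun_prop) hu0
  have hv_pos := pos_of_hasDerivAt_self_mul hv (by fun_prop) hv0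
  set l := min (b₂ / b₁) (c₂ / c₁)
  have hl : a₂ < l * a₁ := by
    rw [max_lt_iff, div_lt_div_iff₀ hb₂ ha₂, div_lt_div_iff₀ hc₂ ha₂] at hsup
    rw [← div_lt_iff₀ ha₁, lt_min_iff, div_lt_div_iff₀ ha₁ hb₁, div_lt_div_iff₀ ha₁ hc₁]
    constructor <;> linarith
  have hv_lim := tendsto_zero_of_competitive_exclusion (le_min (by positivity) (by positivity)) hl
    ((le_div_iff₀ hb₁).1 (min_le_left _ _)) ((le_div_iff₀ hc₁).1 (min_le_right _ _))
    hu_pos hv_pos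
    (le_max_of_hasDerivAt_logistic hb₁ hu_pos (fun t ht => mul_pos hc₁ (hv_pos t ht)) hu) hu hv
  refine ⟨tendsto_of_hasDerivAt_logistic ha₁ hb₁ (eventually_atTop.2 ⟨0, hu_pos⟩)
    (eventually_atTop.2 ⟨0, hu⟩) (by simpa using hv_lim.const_mul c₁), hv_lim⟩
end

section
/- Let u : [0,∞) × ℝ → ℝ be bounded by K* together with its time derivative, supported at each time t in [g(t), h(t)] with g, h Lipschitz and h − g bounded by L. Then the function t ↦ μ ∫_{g(t)}^{h(t)} ∫_{h(t)}^{∞} J(x−y) u(t,x) dy dx is Lipschitz continuous on [0,∞), with Lipschitz constant μ K* (Lip(g) + 2 Lip(h) + L). -/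
open Real Set MeasureTheory

theorem front_speed_lipschitz (J : ℝ → ℝ)
    (hJcont : Continuous J) (hJnonneg : ∀ x, 0 ≤ J x)
    (hJ0 : 0 < J 0) (hJsymm : ∀ x, J (-x) = J x) (hJint : ∫ x, J x = 1)
    (μ Kstar L Kg Kh : ℝ) (hμ : 0 < μ) (hK : 0 < Kstar) (hL : 0 < L)
    (hKg : 0 ≤ Kg) (hKh : 0 ≤ Kh)
    (g h : ℝ → ℝ) (u ut : ℝ → ℝ → ℝ)
    (hg_lip : ∀ s t, 0 ≤ s → 0 ≤ t → |g s - g t| ≤ Kg * |s - t|)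
    (hh_lip : ∀ s t, 0 ≤ s → 0 ≤ t → |h s - h t| ≤ Kh * |s - t|)
    (hgh : ∀ t, 0 ≤ t → g t < h t)
    (hwidth : ∀ t, 0 ≤ t → h t - g t ≤ L)
    (hu_meas : Measurable fun p : ℝ × ℝ => u p.1 p.2)
    (hu_bdd : ∀ t x, |u t x| ≤ Kstar)
    (hut : ∀ t x, 0 ≤ t → HasDerivAt (fun s => u s x) (ut t x) t)
    (hut_bdd : ∀ t x, |ut t x| ≤ Kstar)
    (hsupp : ∀ t x, 0 ≤ t → x ∉ Icc (g t) (h t) → u t x = 0) :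
    ∀ s t, 0 ≤ s → 0 ≤ t →
      |(μ * ∫ x in g t..h t, (∫ y in Ioi (h t), J (x - y)) * u t x) -
        (μ * ∫ x in g s..h s, (∫ y in Ioi (h s), J (x - y)) * u s x)|
      ≤ μ * Kstar * (Kg + 2 * Kh + L) * |t - s| := by
  -- J is integrable
  have Jint : Integrable J := by
    by_contra hc
    rw [integral_undef hc] at hJint
    norm_num at hJint
  -- the cumulative distribution W
  set W : ℝ → ℝ := fun x => ∫ z in Iio x, J z with hWdef
  have Wnonneg : ∀ x, 0 ≤ W x := fun x =>
    setIntegral_nonneg measurableSet_Iio fun z _ => hJnonneg z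
  have Wle1 : ∀ x, W x ≤ 1 := by
    intro x
    calc W x ≤ ∫ z, J z := setIntegral_le_integral Jint (ae_of_all _ hJnonneg)
    _ = 1 := hJint
  have Wmono : Monotone W := by
    intro a b hab
    exact setIntegral_mono_set Jint.integrableOn (ae_of_all _ hJnonneg)
      (HasSubset.Subset.eventuallyLE (Iio_subset_Iio hab))
  have Wmeas : Measurable W := Wmono.measurable
  have Wabs : ∀ x, |W x| ≤ 1 := fun x => abs_le.2 ⟨by linarith [Wnonneg x], Wle1 x⟩
  -- the inner integral is W (x - a)
  have key_sub : ∀ a x : ℝ, (∫ y in Ioi a, J (x - y)) = W (x - a) := by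
    intro a x
    rw [← integral_indicator measurableSet_Ioi]
    have hind : (Ioi a).indicator (fun y => J (x - y))
        = fun y => (Iio (x - a)).indicator J (x - y) := by
      funext y
      simp only [indicator_apply, mem_Ioi, mem_Iio, sub_lt_sub_iff_left]
    rw [hind, integral_sub_left_eq_self (fun z => (Iio (x - a)).indicator J z) volume x,
      integral_indicator measurableSet_Iio]
  -- bounded measurable functions are interval integrable
  have intInt : ∀ (f : ℝ → ℝ) (C : ℝ), Measurable f → (∀ x, |f x| ≤ C) →
      ∀ a b : ℝ, IntervalIntegrable f volume a b := by
    intro f C hf hC a b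
    rw [intervalIntegrable_iff]
    exact Measure.integrableOn_of_bounded (by
        rw [uIoc]; exact (measure_Ioc_lt_top).ne)
      hf.aestronglyMeasurable (ae_of_all _ fun x => by simpa using hC x)
  have WiI : ∀ a b : ℝ, IntervalIntegrable W volume a b := intInt W 1 Wmeas Wabs
  -- time regularity of u
  have hu_time : ∀ s t : ℝ, 0 ≤ s → s ≤ t → ∀ x, |u t x - u s x| ≤ Kstar * (t - s) := by
    intro s t hs hst x
    have key := Convex.norm_image_sub_le_of_norm_hasDerivWithin_le
      (f := fun τ => u τ x) (f' := fun τ => ut τ x) (s := Icc s t) (C := Kstar)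
      (fun τ hτ => (hut τ x (le_trans hs hτ.1)).hasDerivWithinAt)
      (fun τ _ => by simpa using hut_bdd τ x)
      (convex_Icc s t) (left_mem_Icc.2 hst) (right_mem_Icc.2 hst)
    simpa [Real.norm_eq_abs, abs_of_nonneg (sub_nonneg.2 hst)] using key
  -- shift lemma
  have shiftlemma : ∀ c d p q : ℝ, c ≤ d → q ≤ p →
      (∫ x in c..d, (W (x - q) - W (x - p))) ≤ p - q := by
    intro c d p q hcd hqp
    have iq : IntervalIntegrable (fun x => W (x - q)) volume c d :=
      intInt _ 1 (Wmeas.comp (measurable_id.sub measurable_const)) (fun x => Wabs _) c d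
    have ip : IntervalIntegrable (fun x => W (x - p)) volume c d :=
      intInt _ 1 (Wmeas.comp (measurable_id.sub measurable_const)) (fun x => Wabs _) c d
    rw [intervalIntegral.integral_sub iq ip,
      intervalIntegral.integral_comp_sub_right W q,
      intervalIntegral.integral_comp_sub_right W p]
    have add1 := intervalIntegral.integral_add_adjacent_intervals
      (WiI (c - p) (c - q)) (WiI (c - q) (d - q))
    have add2 := intervalIntegral.integral_add_adjacent_intervals
      (WiI (c - p) (d - q)) (WiI (d - q) (d - p))
    have h1 : (0:ℝ) ≤ ∫ x in (c - p)..(c - q), W x :=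
      intervalIntegral.integral_nonneg (by linarith) (fun x _ => Wnonneg x)
    have h2 : (∫ x in (d - p)..(d - q), W x) ≤ p - q := by
      calc (∫ x in (d - p)..(d - q), W x) ≤ ∫ _ in (d - p)..(d - q), (1:ℝ) :=
            intervalIntegral.integral_mono_on (by linarith) (WiI _ _)
              intervalIntegrable_const (fun x _ => Wle1 x)
        _ = p - q := by rw [intervalIntegral.integral_const, smul_eq_mul, mul_one]; ring
    have h3 : (∫ x in (d - q)..(d - p), W x) = - ∫ x in (d - p)..(d - q), W x :=
      intervalIntegral.integral_symm _ _
    linarith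
  -- main one-sided estimate
  have main : ∀ s t : ℝ, 0 ≤ s → 0 ≤ t → s ≤ t →
      |(∫ x in g t..h t, W (x - h t) * u t x) - (∫ x in g s..h s, W (x - h s) * u s x)|
        ≤ Kstar * (Kg + 2 * Kh + L) * (t - s) := by
    intro s t hs ht hst
    have mus : Measurable (fun x => u s x) := hu_meas.comp measurable_prodMk_left
    have mu_t : Measurable (fun x => u t x) := hu_meas.comp measurable_prodMk_left
    have mwt : Measurable (fun x => W (x - h t)) :=
      Wmeas.comp (measurable_id.sub measurable_const)
    have mws : Measurable (fun x => W (x - h s)) :=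
      Wmeas.comp (measurable_id.sub measurable_const)
    -- bound for products
    have bprod : ∀ (a : ℝ) (v : ℝ → ℝ), (∀ x, |v x| ≤ Kstar) →
        ∀ x : ℝ, |W (x - a) * v x| ≤ Kstar := by
      intro a v hv x
      rw [abs_mul]
      calc |W (x - a)| * |v x| ≤ 1 * Kstar :=
            mul_le_mul (Wabs _) (hv x) (abs_nonneg _) zero_le_one
        _ = Kstar := one_mul _
    have iWtut : ∀ a b : ℝ, IntervalIntegrable (fun x => W (x - h t) * u t x) volume a b :=
      intInt _ Kstar (mwt.mul mu_t) (bprod _ _ (fun x => hu_bdd t x))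
    have iWtus : ∀ a b : ℝ, IntervalIntegrable (fun x => W (x - h t) * u s x) volume a b :=
      intInt _ Kstar (mwt.mul mus) (bprod _ _ (fun x => hu_bdd s x))
    have iWsus : ∀ a b : ℝ, IntervalIntegrable (fun x => W (x - h s) * u s x) volume a b :=
      intInt _ Kstar (mws.mul mus) (bprod _ _ (fun x => hu_bdd s x))
    set Ft := ∫ x in g t..h t, W (x - h t) * u t x with hFt
    set T1 := ∫ x in g t..h t, W (x - h t) * u s x with hT1
    set T2 := ∫ x in g s..h s, W (x - h t) * u s x with hT2
    set Fs := ∫ x in g s..h s, W (x - h s) * u s x with hFs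
    have hgshs : g s ≤ h s := (hgh s hs).le
    have hgtht : g t ≤ h t := (hgh t ht).le
    -- term E1
    have e1 : Ft - T1 = ∫ x in g t..h t, W (x - h t) * (u t x - u s x) := by
      rw [hFt, hT1, ← intervalIntegral.integral_sub (iWtut _ _) (iWtus _ _)]
      apply intervalIntegral.integral_congr
      intro x _; ring
    have b1 : |Ft - T1| ≤ Kstar * (t - s) * L := by
      rw [e1]
      have step : ‖∫ x in g t..h t, W (x - h t) * (u t x - u s x)‖
          ≤ (Kstar * (t - s)) * |h t - g t| := by
        apply intervalIntegral.norm_integral_le_of_norm_le_const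
        intro x _
        rw [Real.norm_eq_abs, abs_mul]
        calc |W (x - h t)| * |u t x - u s x| ≤ 1 * (Kstar * (t - s)) :=
              mul_le_mul (Wabs _) (hu_time s t hs hst x) (abs_nonneg _) zero_le_one
          _ = Kstar * (t - s) := one_mul _
      rw [Real.norm_eq_abs] at step
      have hKts : 0 ≤ Kstar * (t - s) := mul_nonneg hK.le (by linarith)
      have : |h t - g t| ≤ L := by rw [abs_of_nonneg (by linarith)]; exact hwidth t ht
      nlinarith [abs_nonneg ((∫ x in g t..h t, W (x - h t) * (u t x - u s x)))]
    -- terms IIa, IIb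
    have e2 : T1 - T2 = (∫ x in g t..g s, W (x - h t) * u s x)
        + (∫ x in h s..h t, W (x - h t) * u s x) := by
      have a1 := intervalIntegral.integral_add_adjacent_intervals
        (iWtus (g t) (g s)) (iWtus (g s) (h t))
      have a2 := intervalIntegral.integral_add_adjacent_intervals
        (iWtus (g s) (h s)) (iWtus (h s) (h t))
      rw [hT1, hT2]; linarith
    have b2a : |∫ x in g t..g s, W (x - h t) * u s x| ≤ Kstar * (Kg * (t - s)) := by
      have step : ‖∫ x in g t..g s, W (x - h t) * u s x‖ ≤ Kstar * |g s - g t| := by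
        apply intervalIntegral.norm_integral_le_of_norm_le_const
        intro x _
        rw [Real.norm_eq_abs]
        exact bprod _ _ (fun x => hu_bdd s x) x
      rw [Real.norm_eq_abs] at step
      have hg' : |g s - g t| ≤ Kg * (t - s) := by
        have h2 := hg_lip s t hs ht
        rwa [abs_of_nonpos (show s - t ≤ 0 by linarith), neg_sub] at h2
      exact step.trans (mul_le_mul_of_nonneg_left hg' hK.le)
    have b2b : |∫ x in h s..h t, W (x - h t) * u s x| ≤ Kstar * (Kh * (t - s)) := by
      have step : ‖∫ x in h s..h t, W (x - h t) * u s x‖ ≤ Kstar * |h t - h s| := by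
        apply intervalIntegral.norm_integral_le_of_norm_le_const
        intro x _
        rw [Real.norm_eq_abs]
        exact bprod _ _ (fun x => hu_bdd s x) x
      rw [Real.norm_eq_abs] at step
      have hh' : |h t - h s| ≤ Kh * (t - s) := by
        have h2 := hh_lip t s ht hs
        rwa [abs_of_nonneg (show (0:ℝ) ≤ t - s by linarith)] at h2
      exact step.trans (mul_le_mul_of_nonneg_left hh' hK.le)
    -- term E3
    have e3 : T2 - Fs = ∫ x in g s..h s, (W (x - h t) * u s x - W (x - h s) * u s x) := by
      rw [hT2, hFs, ← intervalIntegral.integral_sub (iWtus _ _) (iWsus _ _)]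
    have b3 : |T2 - Fs| ≤ Kstar * (Kh * (t - s)) := by
      rw [e3]
      set q := min (h t) (h s) with hq
      set p := max (h t) (h s) with hp
      have hqp : q ≤ p := min_le_max
      have habs : ∀ x : ℝ, |W (x - h t) - W (x - h s)| = W (x - q) - W (x - p) := by
        intro x
        rcases le_total (h t) (h s) with hc | hc
        · rw [abs_of_nonneg (show (0:ℝ) ≤ W (x - h t) - W (x - h s) by
            have := Wmono (show x - h s ≤ x - h t by linarith); linarith),
            hq, hp, min_eq_left hc, max_eq_right hc]
        · rw [abs_of_nonpos (show W (x - h t) - W (x - h s) ≤ 0 by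
            have := Wmono (show x - h t ≤ x - h s by linarith); linarith),
            hq, hp, min_eq_right hc, max_eq_left hc]
          ring
      have iabs : IntervalIntegrable (fun x => |W (x - h t) * u s x - W (x - h s) * u s x|)
          volume (g s) (h s) := ((iWtus (g s) (h s)).sub (iWsus (g s) (h s))).abs
      have irhs : IntervalIntegrable (fun x => Kstar * (W (x - q) - W (x - p)))
          volume (g s) (h s) :=
        (((intInt _ 1 (Wmeas.comp (measurable_id.sub measurable_const)) (fun x => Wabs _)
          (g s) (h s)).sub
          (intInt _ 1 (Wmeas.comp (measurable_id.sub measurable_const)) (fun x => Wabs _)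
          (g s) (h s)))).const_mul Kstar
      have step1 : |∫ x in g s..h s, (W (x - h t) * u s x - W (x - h s) * u s x)|
          ≤ ∫ x in g s..h s, |W (x - h t) * u s x - W (x - h s) * u s x| := by
        have := intervalIntegral.norm_integral_le_integral_norm
          (f := fun x => W (x - h t) * u s x - W (x - h s) * u s x) (μ := volume) hgshs
        simpa [Real.norm_eq_abs] using this
      have step2 : (∫ x in g s..h s, |W (x - h t) * u s x - W (x - h s) * u s x|)
          ≤ ∫ x in g s..h s, Kstar * (W (x - q) - W (x - p)) := by
        apply intervalIntegral.integral_mono_on hgshs iabs irhs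
        intro x _
        rw [← sub_mul, abs_mul, habs x]
        have hWd : 0 ≤ W (x - q) - W (x - p) := by
          have := Wmono (show x - p ≤ x - q by linarith); linarith
        calc (W (x - q) - W (x - p)) * |u s x| ≤ (W (x - q) - W (x - p)) * Kstar :=
              mul_le_mul_of_nonneg_left (hu_bdd s x) hWd
          _ = Kstar * (W (x - q) - W (x - p)) := mul_comm _ _
      have step3 : (∫ x in g s..h s, Kstar * (W (x - q) - W (x - p)))
          ≤ Kstar * (p - q) := by
        rw [intervalIntegral.integral_const_mul]
        exact mul_le_mul_of_nonneg_left (shiftlemma (g s) (h s) p q hgshs hqp) hK.le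
      have hpq : p - q ≤ Kh * (t - s) := by
        have h2 := hh_lip t s ht hs
        rw [abs_of_nonneg (show (0:ℝ) ≤ t - s by linarith)] at h2
        have h3 : p - q = |h s - h t| := by rw [hp, hq]; exact max_sub_min_eq_abs _ _
        rw [abs_sub_comm] at h3
        linarith
      have : Kstar * (p - q) ≤ Kstar * (Kh * (t - s)) :=
        mul_le_mul_of_nonneg_left hpq hK.le
      linarith
    -- combine
    have decomp : Ft - Fs = (Ft - T1) + ((∫ x in g t..g s, W (x - h t) * u s x)
        + (∫ x in h s..h t, W (x - h t) * u s x)) + (T2 - Fs) := by linarith [e2]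
    have tri1 := abs_add_le ((Ft - T1) + ((∫ x in g t..g s, W (x - h t) * u s x)
        + (∫ x in h s..h t, W (x - h t) * u s x))) (T2 - Fs)
    have tri2 := abs_add_le (Ft - T1) ((∫ x in g t..g s, W (x - h t) * u s x)
        + (∫ x in h s..h t, W (x - h t) * u s x))
    have tri3 := abs_add_le (∫ x in g t..g s, W (x - h t) * u s x)
        (∫ x in h s..h t, W (x - h t) * u s x)
    have sum : |Ft - Fs| ≤ Kstar * (t - s) * L + Kstar * (Kg * (t - s))
        + Kstar * (Kh * (t - s)) + Kstar * (Kh * (t - s)) := by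
      rw [decomp]; linarith
    have heq : Kstar * (Kg + 2 * Kh + L) * (t - s) = Kstar * (t - s) * L
        + Kstar * (Kg * (t - s)) + Kstar * (Kh * (t - s)) + Kstar * (Kh * (t - s)) := by ring
    linarith
  -- rewrite both integrands
  have rweq : ∀ τ : ℝ, (∫ x in g τ..h τ, (∫ y in Ioi (h τ), J (x - y)) * u τ x)
      = ∫ x in g τ..h τ, W (x - h τ) * u τ x := by
    intro τ
    apply intervalIntegral.integral_congr
    intro x _
    simp only [key_sub]
  intro s t hs ht
  rw [rweq t, rweq s, ← mul_sub, abs_mul, abs_of_pos hμ]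
  rcases le_total s t with hst | hst
  · have hm := main s t hs ht hst
    rw [abs_of_nonneg (sub_nonneg.2 hst)]
    have h2 := mul_le_mul_of_nonneg_left hm hμ.le
    have heq : μ * Kstar * (Kg + 2 * Kh + L) * (t - s)
        = μ * (Kstar * (Kg + 2 * Kh + L) * (t - s)) := by ring
    linarith
  · have hm := main t s ht hs hst
    rw [abs_sub_comm, abs_sub_comm t s, abs_of_nonneg (sub_nonneg.2 hst)]
    have h2 := mul_le_mul_of_nonneg_left hm hμ.le
    have heq : μ * Kstar * (Kg + 2 * Kh + L) * (s - t)
        = μ * (Kstar * (Kg + 2 * Kh + L) * (s - t)) := by ring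
    linarith
end
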